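/- For fixed L > 0, the function k ↦ ω(k) = 16 K(k)²(2k² − 1)/L² is a strictly increasing bijection from (1/√2, 1) onto (0, ∞). -/

import Mathlib

open Real

/-- The complete elliptic integral of the first kind. -/
noncomputable def ellK (k : ℝ) : ℝ :=
  ∫ θ in (0:ℝ)..(π / 2), 1 / Real.sqrt (1 - k ^ 2 * Real.sin θ ^ 2)

lemma denom_pos {k : ℝ} (hk : k ^ 2 < 1) (θ : ℝ) :
    0 < 1 - k ^ 2 * Real.sin θ ^ 2 := by
  nlinarith [Real.sin_sq_le_one θ, sq_nonneg k, sq_nonneg (Real.sin θ)]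

lemma integrand_cont {k : ℝ} (hk : k ^ 2 < 1) :
    Continuous fun θ : ℝ => 1 / Real.sqrt (1 - k ^ 2 * Real.sin θ ^ 2) := by
  apply continuous_const.div
  · exact Real.continuous_sqrt.comp (by continuity)
  · intro θ
    exact ne_of_gt (Real.sqrt_pos.mpr (denom_pos hk θ))

lemma integrand_intble {k : ℝ} (hk : k ^ 2 < 1) :
    IntervalIntegrable (fun θ : ℝ => 1 / Real.sqrt (1 - k ^ 2 * Real.sin θ ^ 2))
      MeasureTheory.volume 0 (π / 2) :=
  (integrand_cont hk).intervalIntegrable _ _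

lemma ellK_pos {k : ℝ} (hk : k ^ 2 < 1) : 0 < ellK k := by
  apply intervalIntegral.intervalIntegral_pos_of_pos_on (integrand_intble hk)
  · intro θ _
    have := Real.sqrt_pos.mpr (denom_pos hk θ)
    positivity
  · positivity

lemma ellK_lt {k₁ k₂ : ℝ} (h0 : 0 ≤ k₁) (h12 : k₁ < k₂) (h2 : k₂ < 1) :
    ellK k₁ < ellK k₂ := by
  have hk1 : k₁ ^ 2 < 1 := by nlinarith
  have hk2 : k₂ ^ 2 < 1 := by nlinarith
  have key : 0 < ∫ θ in (0:ℝ)..(π/2),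
      (1 / Real.sqrt (1 - k₂ ^ 2 * Real.sin θ ^ 2)
        - 1 / Real.sqrt (1 - k₁ ^ 2 * Real.sin θ ^ 2)) := by
    apply intervalIntegral.intervalIntegral_pos_of_pos_on
      ((integrand_intble hk2).sub (integrand_intble hk1))
    · intro θ hθ
      have hs : 0 < Real.sin θ := Real.sin_pos_of_pos_of_lt_pi hθ.1
        (lt_trans hθ.2 (by linarith [Real.pi_pos]))
    -- 1 - k₂² s² < 1 - k₁² s²
      have hlt : 1 - k₂ ^ 2 * Real.sin θ ^ 2 < 1 - k₁ ^ 2 * Real.sin θ ^ 2 := by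
        have hkk : k₁ ^ 2 < k₂ ^ 2 := by nlinarith
        nlinarith [mul_pos hs hs]
      have h2pos := denom_pos hk2 θ
      have hsq := Real.sqrt_lt_sqrt h2pos.le hlt
      have := Real.sqrt_pos.mpr h2pos
      have := one_div_lt_one_div_of_lt (Real.sqrt_pos.mpr h2pos) hsq
      linarith
    · positivity
  rw [intervalIntegral.integral_sub (integrand_intble hk2) (integrand_intble hk1)] at key
  unfold ellK
  linarith

lemma ellK_contAt {k₀ : ℝ} (hk : k₀ ^ 2 < 1) : ContinuousAt ellK k₀ := by
  have habs : |k₀| < 1 := (sq_lt_one_iff_abs_lt_one k₀).mp hk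
  set k₁ : ℝ := (|k₀| + 1) / 2 with hk₁def
  have h01 : |k₀| < k₁ := by simp only [hk₁def]; cancel_denoms; linarith
  have hk₁1 : k₁ < 1 := by simp only [hk₁def]; cancel_denoms; linarith
  have hk₁0 : 0 < k₁ := by positivity
  have hk₁sq : k₁ ^ 2 < 1 := by nlinarith
  have hbpos : 0 < Real.sqrt (1 - k₁ ^ 2) := Real.sqrt_pos.mpr (by nlinarith)
  have : ContinuousAt (fun k : ℝ => ∫ θ in (0:ℝ)..(π/2),
      1 / Real.sqrt (1 - k ^ 2 * Real.sin θ ^ 2)) k₀ := by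
    apply intervalIntegral.continuousAt_of_dominated_interval
      (bound := fun _ => 1 / Real.sqrt (1 - k₁ ^ 2))
    · filter_upwards with k
      apply Measurable.aestronglyMeasurable
      apply Measurable.div measurable_const
      exact (Real.continuous_sqrt.comp (by continuity)).measurable
    · have hev : ∀ᶠ k : ℝ in nhds k₀, |k| < k₁ :=
        continuous_abs.continuousAt.eventually_lt continuousAt_const h01
      filter_upwards [hev] with k hkk
      filter_upwards with θ _
      have hksq : k ^ 2 < k₁ ^ 2 := by
        have := abs_nonneg k
        nlinarith [sq_abs k]
      have hge : 1 - k₁ ^ 2 ≤ 1 - k ^ 2 * Real.sin θ ^ 2 := by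
        nlinarith [Real.sin_sq_le_one θ, sq_nonneg k, sq_nonneg (Real.sin θ)]
      have h2 : 0 < 1 - k ^ 2 * Real.sin θ ^ 2 := by nlinarith
      rw [Real.norm_of_nonneg (by positivity)]
      apply one_div_le_one_div_of_le hbpos
      exact Real.sqrt_le_sqrt hge
    · exact intervalIntegrable_const
    · filter_upwards with θ _
      have h2 : 0 < 1 - k₀ ^ 2 * Real.sin θ ^ 2 := denom_pos hk θ
      apply ContinuousAt.div continuousAt_const
      · exact (Real.continuous_sqrt.continuousAt).comp (by fun_prop)
      · exact ne_of_gt (Real.sqrt_pos.mpr h2)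
  exact this

lemma log_integral {ε : ℝ} (hε : 0 < ε) :
    ∫ θ in (0:ℝ)..(π/2), 1 / (π/2 - θ + ε)
      = Real.log (π/2 + ε) - Real.log ε := by
  have hpi := Real.pi_pos
  have hder : ∀ θ ∈ Set.uIcc (0:ℝ) (π/2),
      HasDerivAt (fun t : ℝ => -Real.log (π/2 + ε - t)) (1 / (π/2 - θ + ε)) θ := by
    intro θ hθ
    rw [Set.uIcc_of_le (by linarith)] at hθ
    have hne : π/2 + ε - θ ≠ 0 := by
      have := hθ.2; exact ne_of_gt (by linarith)
    have h1 : HasDerivAt (fun t : ℝ => π/2 + ε - t) (-1) θ := by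
      simpa using (hasDerivAt_id θ).const_sub (π/2 + ε)
    have h2 := (Real.hasDerivAt_log hne).comp θ h1
    have h3 := h2.neg
    have e : 1 / (π/2 - θ + ε) = -((π/2 + ε - θ)⁻¹ * -1) := by
      rw [show π/2 - θ + ε = π/2 + ε - θ by ring]; ring
    rw [e]
    exact h3
  have hint : IntervalIntegrable (fun θ : ℝ => 1 / (π/2 - θ + ε))
      MeasureTheory.volume 0 (π/2) := by
    apply ContinuousOn.intervalIntegrable
    apply ContinuousOn.div continuousOn_const (by fun_prop)
    intro θ hθ
    rw [Set.uIcc_of_le (by linarith)] at hθ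
    have := hθ.2; exact ne_of_gt (by linarith)
  rw [intervalIntegral.integral_eq_sub_of_hasDerivAt hder hint]
  simp
  ring_nf

lemma ellK_ge {k : ℝ} (h0 : 0 ≤ k) (h1 : k ^ 2 < 1) :
    Real.log (π/2 + Real.sqrt (1 - k ^ 2)) - Real.log (Real.sqrt (1 - k ^ 2))
      ≤ ellK k := by
  have hpi := Real.pi_pos
  set ε := Real.sqrt (1 - k ^ 2) with hεdef
  have hε : 0 < ε := Real.sqrt_pos.mpr (by linarith)
  have hεsq : ε ^ 2 = 1 - k ^ 2 := Real.sq_sqrt (by linarith)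
  have hint : IntervalIntegrable (fun θ : ℝ => 1 / (π/2 - θ + ε))
      MeasureTheory.volume 0 (π/2) := by
    apply ContinuousOn.intervalIntegrable
    apply ContinuousOn.div continuousOn_const (by fun_prop)
    intro θ hθ
    rw [Set.uIcc_of_le (by linarith)] at hθ
    have := hθ.2; exact ne_of_gt (by linarith)
  have hmono : ∀ θ ∈ Set.Icc (0:ℝ) (π/2),
      1 / (π/2 - θ + ε) ≤ 1 / Real.sqrt (1 - k ^ 2 * Real.sin θ ^ 2) := by
    intro θ hθ
    have hc0 : 0 ≤ Real.cos θ :=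
      Real.cos_nonneg_of_mem_Icc ⟨by linarith [hθ.1], hθ.2⟩
    have hcs : Real.cos θ ≤ π/2 - θ := by
      have := Real.sin_le (by linarith [hθ.2] : (0:ℝ) ≤ π/2 - θ)
      rwa [Real.sin_pi_div_two_sub] at this
    have hsc := Real.sin_sq_add_cos_sq θ
    have hs1 : Real.sin θ ^ 2 ≤ 1 := Real.sin_sq_le_one θ
    have hdp : 0 < 1 - k ^ 2 * Real.sin θ ^ 2 := denom_pos h1 θ
    have hsqle : Real.sqrt (1 - k ^ 2 * Real.sin θ ^ 2) ≤ π/2 - θ + ε := by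
      have hle : 1 - k ^ 2 * Real.sin θ ^ 2 ≤ (π/2 - θ + ε) ^ 2 := by
        nlinarith [sq_nonneg (Real.sin θ), mul_nonneg (sub_nonneg.mpr hθ.2) hε.le,
          sq_nonneg (Real.cos θ)]
      calc Real.sqrt (1 - k ^ 2 * Real.sin θ ^ 2)
          ≤ Real.sqrt ((π/2 - θ + ε) ^ 2) := Real.sqrt_le_sqrt hle
        _ = π/2 - θ + ε := by
            rw [Real.sqrt_sq (by linarith [hθ.2])]
    exact one_div_le_one_div_of_le (Real.sqrt_pos.mpr hdp) hsqle
  have := intervalIntegral.integral_mono_on (by linarith : (0:ℝ) ≤ π/2)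
    hint (integrand_intble h1) hmono
  rw [log_integral hε] at this
  exact this

set_option maxHeartbeats 2000000 in
theorem NLS_frequency_map (L : ℝ) (hL : 0 < L) :
    StrictMonoOn (fun k : ℝ => 16 * ellK k ^ 2 * (2 * k ^ 2 - 1) / L ^ 2)
        (Set.Ioo (1 / Real.sqrt 2) 1)
      ∧ (fun k : ℝ => 16 * ellK k ^ 2 * (2 * k ^ 2 - 1) / L ^ 2) ''
          Set.Ioo (1 / Real.sqrt 2) 1 = Set.Ioi 0 := by
  have hpi := Real.pi_gt_three
  set a : ℝ := 1 / Real.sqrt 2 with hadef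
  have hs2 : (0:ℝ) < Real.sqrt 2 := Real.sqrt_pos.mpr (by norm_num)
  have ha2 : a ^ 2 = 1 / 2 := by
    rw [hadef, div_pow, one_pow, Real.sq_sqrt (by norm_num : (2:ℝ) ≥ 0)]
  have ha0 : 0 < a := by positivity
  set f : ℝ → ℝ := fun k => 16 * ellK k ^ 2 * (2 * k ^ 2 - 1) / L ^ 2 with hfdef
  have hL2 : (0:ℝ) < L ^ 2 := by positivity
  -- positivity of f on the interval
  have hfpos : ∀ k ∈ Set.Ioo a 1, 0 < f k := by
    intro k hk
    have hk2 : k ^ 2 < 1 := by nlinarith [hk.1, hk.2, ha0]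
    have hc : 0 < 2 * k ^ 2 - 1 := by nlinarith [hk.1, ha0]
    have hE := ellK_pos hk2
    have : 0 < 16 * ellK k ^ 2 * (2 * k ^ 2 - 1) := by positivity
    exact div_pos this hL2
  -- strict monotonicity
  have hmono : StrictMonoOn f (Set.Ioo a 1) := by
    intro k₁ hk₁ k₂ hk₂ hlt
    have h10 : 0 < k₁ := lt_trans ha0 hk₁.1
    have h1sq : k₁ ^ 2 < 1 := by nlinarith [hk₁.2]
    have h2sq : k₂ ^ 2 < 1 := by nlinarith [hk₂.2, lt_trans ha0 hk₂.1]
    have hE1 := ellK_pos h1sq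
    have hE := ellK_lt h10.le hlt hk₂.2
    have hc1 : 0 < 2 * k₁ ^ 2 - 1 := by nlinarith [hk₁.1, ha0]
    have hc : 2 * k₁ ^ 2 - 1 < 2 * k₂ ^ 2 - 1 := by nlinarith
    have key : 16 * ellK k₁ ^ 2 * (2 * k₁ ^ 2 - 1)
        < 16 * ellK k₂ ^ 2 * (2 * k₂ ^ 2 - 1) := by
      have hE2sq : ellK k₁ ^ 2 < ellK k₂ ^ 2 := by nlinarith
      nlinarith
    exact (div_lt_div_iff_of_pos_right hL2).mpr key
  refine ⟨hmono, ?_⟩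
  ext y
  simp only [Set.mem_image, Set.mem_Ioi]
  constructor
  · rintro ⟨k, hk, rfl⟩
    exact hfpos k hk
  · intro hy
    -- choose b close to 1 with f b > y
    obtain ⟨M, hM0, hM2⟩ : ∃ M : ℝ, 0 ≤ M ∧ M ^ 2 = y * L ^ 2 / 8 :=
      ⟨Real.sqrt (y * L ^ 2 / 8), Real.sqrt_nonneg _, Real.sq_sqrt (by positivity)⟩
    obtain ⟨ε, hε0, hεhalf, hlogε⟩ :
        ∃ ε : ℝ, 0 < ε ∧ ε ≤ 1/2 ∧ Real.log ε ≤ -(M + 1) := by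
      refine ⟨min (Real.exp (-(M + 1))) (1/2), lt_min (Real.exp_pos _) (by norm_num),
        min_le_right _ _, ?_⟩
      calc Real.log (min (Real.exp (-(M + 1))) (1/2))
          ≤ Real.log (Real.exp (-(M + 1))) :=
            Real.log_le_log (lt_min (Real.exp_pos _) (by norm_num)) (min_le_left _ _)
        _ = -(M + 1) := Real.log_exp _
    have hεsq : ε ^ 2 ≤ 1/4 := by nlinarith
    obtain ⟨b, hb2, hb0, hsb⟩ :
        ∃ b : ℝ, b ^ 2 = 1 - ε ^ 2 ∧ 0 < b ∧ Real.sqrt (1 - b ^ 2) = ε := by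
      refine ⟨Real.sqrt (1 - ε ^ 2), Real.sq_sqrt (by nlinarith), Real.sqrt_pos.mpr (by nlinarith), ?_⟩
      rw [Real.sq_sqrt (by nlinarith : (0:ℝ) ≤ 1 - ε ^ 2)]
      simp [Real.sqrt_sq hε0.le]
    have hbsq : b ^ 2 < 1 := by linarith [pow_pos hε0 2, hb2]
    have hb1 : b < 1 := lt_of_pow_lt_pow_left₀ 2 zero_le_one (by rw [one_pow]; exact hbsq)
    have hab : a < b := lt_of_pow_lt_pow_left₀ 2 hb0.le (by linarith [ha2])
    -- lower bound on ellK b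
    have hEb : M + 1 ≤ ellK b := by
      have h := ellK_ge hb0.le hbsq
      rw [hsb] at h
      have hlogpos : 0 < Real.log (π/2 + ε) :=
        Real.log_pos (by linarith)
      linarith
    have hEbpos : 0 < ellK b := by linarith
    -- f b > y
    have hfb : y < f b := by
      rw [hfdef]
      simp only
      rw [lt_div_iff₀ hL2]
      have hcb : 1/2 ≤ 2 * b ^ 2 - 1 := by linarith
      have hE2 : (M + 1) ^ 2 ≤ ellK b ^ 2 := pow_le_pow_left₀ (by linarith) hEb 2
      have h8 : y * L ^ 2 < 8 * ellK b ^ 2 := by nlinarith [hE2, hM2, hM0]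
      nlinarith [h8, mul_nonneg (sq_nonneg (ellK b))
        (show (0:ℝ) ≤ 16 * (2 * b ^ 2 - 1) - 8 by linarith)]
    -- intermediate value theorem on [a, b]
    have hcont : ContinuousOn f (Set.Icc a b) := by
      intro k hk
      have hk0 : 0 < k := lt_of_lt_of_le ha0 hk.1
      have hksq : k ^ 2 < 1 := by nlinarith [hk.2]
      have : ContinuousAt f k := by
        rw [hfdef]
        exact ((continuousAt_const.mul ((ellK_contAt hksq).pow 2)).mul
          (by fun_prop)).div_const _
      exact this.continuousWithinAt
    have hfa : f a = 0 := by
      rw [hfdef]; simp only; rw [ha2]; ring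
    have hsub := intermediate_value_Ioo hab.le hcont
    have hyin : y ∈ Set.Ioo (f a) (f b) := by
      rw [hfa]; exact ⟨hy, hfb⟩
    obtain ⟨k, hk, hfk⟩ := hsub hyin
    exact ⟨k, ⟨hk.1, lt_trans hk.2 hb1⟩, hfk⟩
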